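/- arXiv:2403.07775 — 4 statements merged into one kernel-verified Lean document; each statement's English description precedes it below -/
import Mathlib

section
/- Let d_1 ≤ d_2 ≤ ... ≤ d_n be nonnegative reals and q_1,...,q_n ∈ [0,1]. Define F = q_n d_n + ∑_{t=1}^{n-1} q_t d_t ∏_{i=t+1}^{n} (1 - q_i) (the expected maximum service cost). Then F ≥ q_u d_u for every index u with 1 ≤ u ≤ n. -/
open Finset

/-- Telescoping identity for the success probabilities. -/
lemma tele_aux (q : ℕ → ℝ) :
    ∀ k u n : ℕ, n = u + k →
      ∑ t ∈ Icc u n, q t * ∏ i ∈ Ioc t n, (1 - q i)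
        = 1 - ∏ i ∈ Icc u n, (1 - q i) := by
  intro k
  induction k with
  | zero =>
    intro u n h
    subst h
    simp
  | succ k ih =>
    intro u n h
    have hu : u ≤ n := by omega
    rw [Finset.Icc_eq_cons_Ioc hu, Finset.sum_cons, Finset.prod_cons,
      ← Finset.Icc_add_one_left_eq_Ioc, ih (u + 1) n (by omega)]
    ring

/-- Every individual term q_u d_u is a lower bound on the expected maximum service cost. -/
theorem stmt2 (n : ℕ) (hn : 1 ≤ n) (d q : ℕ → ℝ)
    (hd0 : ∀ i ∈ Icc 1 n, 0 ≤ d i)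
    (hdmono : ∀ i ∈ Icc 1 n, ∀ j ∈ Icc 1 n, i ≤ j → d i ≤ d j)
    (hq : ∀ i ∈ Icc 1 n, 0 ≤ q i ∧ q i ≤ 1) :
    ∀ u ∈ Icc 1 n,
      q u * d u ≤
        q n * d n + ∑ t ∈ Ico 1 n, q t * d t * ∏ i ∈ Ioc t n, (1 - q i) := by
  intro u hu
  rw [mem_Icc] at hu
  obtain ⟨hu1, hun⟩ := hu
  have hP : ∀ t : ℕ, 0 ≤ ∏ i ∈ Ioc t n, (1 - q i) := by
    intro t
    refine Finset.prod_nonneg fun i hi => ?_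
    rw [mem_Ioc] at hi
    have := hq i (by rw [mem_Icc]; omega)
    linarith [this.2]
  -- rewrite RHS as a single sum over Icc 1 n
  have hsplit : q n * d n + ∑ t ∈ Ico 1 n, q t * d t * ∏ i ∈ Ioc t n, (1 - q i)
      = ∑ t ∈ Icc 1 n, q t * d t * ∏ i ∈ Ioc t n, (1 - q i) := by
    rw [show Icc 1 n = Ico 1 (n + 1) from (Finset.Ico_add_one_right_eq_Icc 1 n).symm,
      Finset.sum_Ico_succ_top (by omega)]
    simp [add_comm]
  rw [hsplit]
  -- drop the terms with t < u
  have hsub : ∑ t ∈ Icc u n, q t * d t * ∏ i ∈ Ioc t n, (1 - q i)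
      ≤ ∑ t ∈ Icc 1 n, q t * d t * ∏ i ∈ Ioc t n, (1 - q i) := by
    refine Finset.sum_le_sum_of_subset_of_nonneg ?_ ?_
    · exact Finset.Icc_subset_Icc_left hu1
    · intro t ht _
      rw [mem_Icc] at ht
      have hqt := hq t (by rw [mem_Icc]; exact ⟨by omega, ht.2⟩)
      have hdt := hd0 t (by rw [mem_Icc]; exact ⟨by omega, ht.2⟩)
      exact mul_nonneg (mul_nonneg hqt.1 hdt) (hP t)
  refine le_trans ?_ hsub
  -- bound each term below by  q t * d u * P t
  have hstep : ∑ t ∈ Icc u n, q t * d u * ∏ i ∈ Ioc t n, (1 - q i)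
      ≤ ∑ t ∈ Icc u n, q t * d t * ∏ i ∈ Ioc t n, (1 - q i) := by
    refine Finset.sum_le_sum fun t ht => ?_
    rw [mem_Icc] at ht
    have hqt := hq t (by rw [mem_Icc]; exact ⟨by omega, ht.2⟩)
    have hdm := hdmono u (by rw [mem_Icc]; exact ⟨hu1, hun⟩) t
      (by rw [mem_Icc]; exact ⟨by omega, ht.2⟩) ht.1
    have := mul_le_mul_of_nonneg_left hdm hqt.1
    exact mul_le_mul_of_nonneg_right this (hP t)
  refine le_trans ?_ hstep
  have hfac : ∑ t ∈ Icc u n, q t * d u * ∏ i ∈ Ioc t n, (1 - q i)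
      = d u * (1 - ∏ i ∈ Icc u n, (1 - q i)) := by
    rw [← tele_aux q (n - u) u n (by omega), Finset.mul_sum]
    exact Finset.sum_congr rfl fun t _ => by ring
  rw [hfac]
  have hdu := hd0 u (by rw [mem_Icc]; exact ⟨hu1, hun⟩)
  have hqu := hq u (by rw [mem_Icc]; exact ⟨hu1, hun⟩)
  have hprod : ∏ i ∈ Icc u n, (1 - q i) ≤ 1 - q u := by
    rw [Finset.Icc_eq_cons_Ioc hun, Finset.prod_cons]
    have h1 : ∏ i ∈ Ioc u n, (1 - q i) ≤ 1 := by
      refine Finset.prod_le_one (fun i hi => ?_) (fun i hi => ?_)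
      · rw [mem_Ioc] at hi
        have := hq i (by rw [mem_Icc]; omega)
        linarith [this.2]
      · rw [mem_Ioc] at hi
        have := hq i (by rw [mem_Icc]; omega)
        linarith [this.1]
    calc (1 - q u) * ∏ i ∈ Ioc u n, (1 - q i) ≤ (1 - q u) * 1 :=
          mul_le_mul_of_nonneg_left h1 (by linarith [hqu.2])
      _ = 1 - q u := mul_one _
  calc q u * d u = d u * (1 - (1 - q u)) := by ring
    _ ≤ d u * (1 - ∏ i ∈ Icc u n, (1 - q i)) := by
        apply mul_le_mul_of_nonneg_left _ hdu
        linarith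
end

section
/- Let d_1 ≤ ... ≤ d_n ≥ 0 be sorted assignment distances, q_1,...,q_n ∈ [0,1] the corresponding demand probabilities, and let q_{(1)} ≤ ... ≤ q_{(n)} be the probabilities sorted nondecreasingly. For K ≤ n, define F = ∑_{t=n-K+1}^{n} q_t d_t ∏_{i=t+1}^{n}(1-q_i) and L = ∑_{t=n-K+1}^{n} q_{(n-t+1)} d_t ∏_{s=1}^{n-t}(1-q_{(s)}). Then F ≥ L. -/
open Finset

lemma aux_prod (f : ℕ → ℝ) :
    ∀ N : ℕ, (∀ j ∈ Icc 1 N, 0 ≤ f j) →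
      (∀ i ∈ Icc 1 N, ∀ j ∈ Icc 1 N, i ≤ j → f j ≤ f i) →
      ∀ S : Finset ℕ, S ⊆ Icc 1 N → ∏ j ∈ S, f j ≤ ∏ j ∈ Icc 1 S.card, f j := by
  intro N
  induction N with
  | zero =>
    intro _ _ S hS
    have hSe : S = ∅ := Finset.subset_empty.mp (by simpa using hS)
    simp [hSe]
  | succ N ih =>
    intro h0 hm S hS
    have h0' : ∀ j ∈ Icc 1 N, 0 ≤ f j :=
      fun j hj => h0 j (Finset.Icc_subset_Icc_right (Nat.le_succ N) hj)
    have hm' : ∀ i ∈ Icc 1 N, ∀ j ∈ Icc 1 N, i ≤ j → f j ≤ f i :=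
      fun i hi j hj hij => hm i (Finset.Icc_subset_Icc_right (Nat.le_succ N) hi) j
        (Finset.Icc_subset_Icc_right (Nat.le_succ N) hj) hij
    by_cases hmem : N + 1 ∈ S
    · have hS' : S.erase (N + 1) ⊆ Icc 1 N := by
        intro x hx
        have hx1 := hS (Finset.mem_of_mem_erase hx)
        have hxne := Finset.ne_of_mem_erase hx
        simp only [mem_Icc] at hx1 ⊢
        omega
      have hpos : 0 < S.card := Finset.card_pos.mpr ⟨_, hmem⟩
      have hcard : S.card = (S.erase (N + 1)).card + 1 := by
        rw [Finset.card_erase_of_mem hmem]; omega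
      have hcardle : S.card ≤ N + 1 := by
        have h := Finset.card_le_card hS
        simpa [Nat.card_Icc] using h
      have hprodnn : 0 ≤ ∏ j ∈ Icc 1 (S.erase (N + 1)).card, f j := by
        apply Finset.prod_nonneg
        intro j hj
        apply h0 j
        have hle : (S.erase (N + 1)).card ≤ N := by
          have h := Finset.card_le_card hS'
          simpa [Nat.card_Icc] using h
        simp only [mem_Icc] at hj ⊢
        omega
      calc ∏ j ∈ S, f j = f (N + 1) * ∏ j ∈ S.erase (N + 1), f j :=
            (Finset.mul_prod_erase S f hmem).symm
        _ ≤ f (N + 1) * ∏ j ∈ Icc 1 (S.erase (N + 1)).card, f j := by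
            apply mul_le_mul_of_nonneg_left (ih h0' hm' _ hS') (h0 _ (by simp))
        _ ≤ f S.card * ∏ j ∈ Icc 1 (S.erase (N + 1)).card, f j := by
            apply mul_le_mul_of_nonneg_right _ hprodnn
            exact hm S.card (by simp only [mem_Icc]; omega) (N + 1)
              (by simp only [mem_Icc]; omega) hcardle
        _ = ∏ j ∈ Icc 1 S.card, f j := by
            rw [hcard, Finset.prod_Icc_succ_top (by omega), mul_comm]
    · have hS2 : S ⊆ Icc 1 N := by
        intro x hx
        have hx1 := hS hx
        have hxne : x ≠ N + 1 := fun h => hmem (h ▸ hx)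
        simp only [mem_Icc] at hx1 ⊢
        omega
      exact ih h0' hm' S hS2

lemma aux_abel (n : ℕ) (d g : ℕ → ℝ)
    (hg0 : g (n + 1) = 0)
    (hg : ∀ t ∈ Icc 1 (n + 1), 0 ≤ g t)
    (hd0 : ∀ t ∈ Icc 1 n, 0 ≤ d t)
    (hdm : ∀ t ∈ Icc 1 n, ∀ u ∈ Icc 1 n, t ≤ u → d t ≤ d u) :
    ∀ k a, a + k = n + 1 → 1 ≤ a →
      g a * d a ≤ ∑ t ∈ Icc a n, (g t - g (t + 1)) * d t := by
  intro k
  induction k with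
  | zero =>
    intro a ha h1
    have haa : a = n + 1 := by omega
    subst haa
    rw [Finset.Icc_eq_empty (by omega), Finset.sum_empty, hg0, zero_mul]
  | succ k ih =>
    intro a ha h1
    have han : a ≤ n := by omega
    have hsplit : Icc a n = insert a (Icc (a + 1) n) := by
      rw [Finset.Icc_add_one_left_eq_Ioc, Finset.Ioc_insert_left han]
    rw [hsplit, Finset.sum_insert (by simp only [mem_Icc]; omega)]
    have IH := ih (a + 1) (by omega) (by omega)
    have hstep : g (a + 1) * d a ≤ g (a + 1) * d (a + 1) := by
      by_cases hc : a + 1 ≤ n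
      · exact mul_le_mul_of_nonneg_left
          (hdm a (by simp only [mem_Icc]; omega) (a + 1) (by simp only [mem_Icc]; omega)
            (by omega))
          (hg (a + 1) (by simp only [mem_Icc]; omega))
      · have he : a + 1 = n + 1 := by omega
        rw [he, hg0]; simp
    linarith

open Finset

/-- Theorem 5.2: ordered median with weights q_{(n-t+1)} κ^t lower-bounds the K-PpCP objective. -/
theorem stmt6 (n K : ℕ) (hK : 1 ≤ K) (hKn : K ≤ n)
    (d q qs : ℕ → ℝ) (σ : Equiv.Perm ℕ)
    (hσ : ∀ i ∈ Icc 1 n, σ i ∈ Icc 1 n)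
    (hqs : ∀ i ∈ Icc 1 n, qs i = q (σ i))
    (hqsmono : ∀ i ∈ Icc 1 n, ∀ j ∈ Icc 1 n, i ≤ j → qs i ≤ qs j)
    (hd0 : ∀ i ∈ Icc 1 n, 0 ≤ d i)
    (hdmono : ∀ i ∈ Icc 1 n, ∀ j ∈ Icc 1 n, i ≤ j → d i ≤ d j)
    (hq : ∀ i ∈ Icc 1 n, 0 ≤ q i ∧ q i ≤ 1) :
    (∑ t ∈ Icc (n - K + 1) n, qs (n - t + 1) * d t * ∏ s ∈ Icc 1 (n - t), (1 - qs s))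
      ≤ ∑ t ∈ Icc (n - K + 1) n, q t * d t * ∏ i ∈ Ioc t n, (1 - q i) := by
  have ha1 : 1 ≤ n - K + 1 := by omega
  have han : n - K + 1 ≤ n := by omega
  -- σ restricted to Icc 1 n is a bijection onto Icc 1 n
  have himg : Finset.image σ (Icc 1 n) = Icc 1 n := by
    apply Finset.eq_of_subset_of_card_le
    · intro x hx
      obtain ⟨i, hi, rfl⟩ := Finset.mem_image.mp hx
      exact hσ i hi
    · rw [Finset.card_image_of_injective _ σ.injective]
  have hsymm : ∀ i ∈ Icc 1 n, σ.symm i ∈ Icc 1 n := by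
    intro i hi
    rw [← himg] at hi
    obtain ⟨j, hj, hji⟩ := Finset.mem_image.mp hi
    have hj' : σ.symm i = j := by rw [← hji]; simp
    rw [hj']; exact hj
  have hq_eq : ∀ i ∈ Icc 1 n, q i = qs (σ.symm i) := by
    intro i hi
    rw [hqs _ (hsymm i hi), Equiv.apply_symm_apply]
  have hqs01 : ∀ j ∈ Icc 1 n, 0 ≤ qs j ∧ qs j ≤ 1 := by
    intro j hj
    rw [hqs j hj]
    exact hq _ (hσ j hj)
  -- key bound: any tail product of (1-q) is at most the product of the largest (1-qs)
  have hWV : ∀ t, 1 ≤ t →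
      ∏ i ∈ Icc t n, (1 - q i) ≤ ∏ s ∈ Icc 1 (n + 1 - t), (1 - qs s) := by
    intro t h1t
    have hsub : Icc t n ⊆ Icc 1 n := Finset.Icc_subset_Icc_left h1t
    have hsub2 : (Icc t n).image (fun i => σ.symm i) ⊆ Icc 1 n := by
      intro x hx
      obtain ⟨i, hi, rfl⟩ := Finset.mem_image.mp hx
      exact hsymm i (hsub hi)
    have hcard : ((Icc t n).image (fun i => σ.symm i)).card = n + 1 - t := by
      rw [Finset.card_image_of_injective _ σ.symm.injective, Nat.card_Icc]
    have e1 : ∏ i ∈ Icc t n, (1 - q i)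
        = ∏ j ∈ (Icc t n).image (fun i => σ.symm i), (1 - qs j) := by
      rw [Finset.prod_image (fun x _ y _ h => σ.symm.injective h)]
      exact Finset.prod_congr rfl fun i hi => by rw [hq_eq i (hsub hi)]
    have key := aux_prod (fun j => 1 - qs j) n
      (by intro j hj; have h := hqs01 j hj; show (0:ℝ) ≤ 1 - qs j; linarith [h.2])
      (by intro i hi j hj hij
          have h := hqsmono i hi j hj hij
          show (1:ℝ) - qs j ≤ 1 - qs i; linarith)
      _ hsub2
    rw [hcard] at key
    rw [e1]; exact key
  -- set up Abel summation with g t = V t - W t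
  have hg0 : (fun t => (∏ s ∈ Icc 1 (n + 1 - t), (1 - qs s))
      - ∏ i ∈ Icc t n, (1 - q i)) (n + 1) = 0 := by
    show (∏ s ∈ Icc 1 (n + 1 - (n + 1)), (1 - qs s)) - (∏ i ∈ Icc (n + 1) n, (1 - q i)) = 0
    rw [show n + 1 - (n + 1) = 0 from by omega,
      Finset.Icc_eq_empty (show ¬(1:ℕ) ≤ 0 by omega),
      Finset.Icc_eq_empty (show ¬n + 1 ≤ n by omega)]
    simp
  have hgnn : ∀ t ∈ Icc 1 (n + 1), (0:ℝ) ≤ (fun t => (∏ s ∈ Icc 1 (n + 1 - t), (1 - qs s))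
      - ∏ i ∈ Icc t n, (1 - q i)) t := by
    intro t ht
    have h := hWV t (mem_Icc.mp ht).1
    show (0:ℝ) ≤ (∏ s ∈ Icc 1 (n + 1 - t), (1 - qs s)) - ∏ i ∈ Icc t n, (1 - q i)
    linarith
  have key := aux_abel n d
    (fun t => (∏ s ∈ Icc 1 (n + 1 - t), (1 - qs s)) - ∏ i ∈ Icc t n, (1 - q i))
    hg0 hgnn hd0 hdmono (n + 1 - (n - K + 1)) (n - K + 1) (by omega) ha1
  -- rewrite the telescoping sum as the difference of the two goal sums
  have hsum : ∑ t ∈ Icc (n - K + 1) n,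
      ((((∏ s ∈ Icc 1 (n + 1 - t), (1 - qs s)) - ∏ i ∈ Icc t n, (1 - q i))
        - ((∏ s ∈ Icc 1 (n + 1 - (t + 1)), (1 - qs s)) - ∏ i ∈ Icc (t + 1) n, (1 - q i))) * d t)
      = (∑ t ∈ Icc (n - K + 1) n, q t * d t * ∏ i ∈ Ioc t n, (1 - q i))
        - ∑ t ∈ Icc (n - K + 1) n, qs (n - t + 1) * d t * ∏ s ∈ Icc 1 (n - t), (1 - qs s) := by
    rw [← Finset.sum_sub_distrib]
    apply Finset.sum_congr rfl
    intro t ht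
    obtain ⟨hta, htn⟩ := mem_Icc.mp ht
    have e2 : Icc t n = insert t (Ioc t n) := (Finset.Ioc_insert_left htn).symm
    have e3 : Icc (t + 1) n = Ioc t n := Finset.Icc_add_one_left_eq_Ioc t n
    have e4 : n + 1 - (t + 1) = n - t := by omega
    have e5 : n + 1 - t = (n - t) + 1 := by omega
    rw [e2, e3, e4, e5, Finset.prod_insert (by simp),
      Finset.prod_Icc_succ_top (show 1 ≤ (n - t) + 1 by omega)]
    ring
  have hga : (0:ℝ) ≤ (∏ s ∈ Icc 1 (n + 1 - (n - K + 1)), (1 - qs s))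
      - ∏ i ∈ Icc (n - K + 1) n, (1 - q i) := by
    have h := hWV (n - K + 1) ha1
    linarith
  have hda : 0 ≤ d (n - K + 1) := hd0 _ (by simp only [mem_Icc]; omega)
  nlinarith [key, hsum, mul_nonneg hga hda]
end

section
/- Let q_1,...,q_n ∈ (0,1] and d_1 ≤ ... ≤ d_n ≥ 0. Suppose a customer at sorted position s with distance d' is moved to position t > s with new distance d ≥ d' (i.e., distances at positions s+1,...,t shift down by one and the customer's own distance increases from d' to d), while all other customer–probability pairs remain unchanged. Then the expected maximum service cost F = ∑_{u=1}^{n} q_u d_u ∏_{v=u+1}^{n}(1-q_v) does not decrease. -/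
/-!
Processing customers in order of distance, the expected maximum cost is obtained by starting
from `0` and applying the affine step `x ↦ (1 - q u) * x + q u * d u` for `u = 1, …, n`.
Every step is monotone, and the composite `Ψ` of the steps at the intermediate positions is
affine, so moving the customer from position `s` (distance `d'`) to position `t` changes
`(1 - q) * Ψ x + q * d t` into `Ψ ((1 - q) * x + q * d') = (1 - q) * Ψ x + q * Ψ d'`.
Finally `Ψ d' ≤ d t`, since each intermediate step is a convex combination with a distance
at most `d t`.
-/

open Finset

/-- The result of the affine steps `x ↦ (1 - q u) * x + q u * d u` for `u = a + 1, …, b`,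
started at `y`. When `y ≤ d (a + 1) ≤ … ≤ d b`, it is the expected maximum of `y` and the
costs `d u` of the customers `u ∈ (a, b]`, present independently with probability `q u`. -/
def expectedMaxCost (d q : ℕ → ℝ) (a b : ℕ) (y : ℝ) : ℝ :=
  y * ∏ v ∈ Ioc a b, (1 - q v) + ∑ u ∈ Ioc a b, q u * d u * ∏ v ∈ Ioc u b, (1 - q v)

section

variable {d q d' q' : ℕ → ℝ} {a b c : ℕ}

theorem sum_Icc_eq_expectedMaxCost (d q : ℕ → ℝ) (n : ℕ) :
    ∑ u ∈ Icc 1 n, q u * d u * ∏ v ∈ Ioc u n, (1 - q v) = expectedMaxCost d q 0 n 0 := by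
  simp [expectedMaxCost, ← Icc_add_one_left_eq_Ioc]

theorem expectedMaxCost_self (d q : ℕ → ℝ) (a : ℕ) (y : ℝ) :
    expectedMaxCost d q a a y = y := by
  simp [expectedMaxCost]

theorem expectedMaxCost_succ (d q : ℕ → ℝ) (b : ℕ) (y : ℝ) :
    expectedMaxCost d q b (b + 1) y = (1 - q (b + 1)) * y + q (b + 1) * d (b + 1) := by
  simp only [expectedMaxCost, Nat.Ioc_succ_singleton, prod_singleton, sum_singleton,
    Ioc_self, prod_empty]
  ring

theorem expectedMaxCost_trans (hab : a ≤ b) (hbc : b ≤ c) (y : ℝ) :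
    expectedMaxCost d q a c y = expectedMaxCost d q b c (expectedMaxCost d q a b y) := by
  have hsplit : ∀ u ∈ Ioc a b, q u * d u * ∏ v ∈ Ioc u c, (1 - q v)
      = q u * d u * (∏ v ∈ Ioc u b, (1 - q v)) * ∏ v ∈ Ioc b c, (1 - q v) := by
    intro u hu
    rw [← prod_Ioc_consecutive _ (mem_Ioc.1 hu).2 hbc]
    ring
  simp only [expectedMaxCost]
  rw [← sum_Ioc_consecutive _ hab hbc, ← prod_Ioc_consecutive _ hab hbc, sum_congr rfl hsplit,
    ← sum_mul]
  ring

theorem expectedMaxCost_affine_combination (d q : ℕ → ℝ) (a b : ℕ) (r x y : ℝ) :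
    expectedMaxCost d q a b ((1 - r) * x + r * y)
      = (1 - r) * expectedMaxCost d q a b x + r * expectedMaxCost d q a b y := by
  simp only [expectedMaxCost]
  ring

theorem expectedMaxCost_monotone (hq : ∀ u ∈ Ioc a b, q u ≤ 1) :
    Monotone (expectedMaxCost d q a b) := by
  intro x y hxy
  have hP : 0 ≤ ∏ v ∈ Ioc a b, (1 - q v) := prod_nonneg fun v hv ↦ sub_nonneg.2 (hq v hv)
  simp only [expectedMaxCost]
  gcongr

theorem expectedMaxCost_congr (h : ∀ u ∈ Ioc a b, d' u = d u ∧ q' u = q u) :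
    expectedMaxCost d' q' a b = expectedMaxCost d q a b := by
  have hprod : ∀ w, a ≤ w → ∏ v ∈ Ioc w b, (1 - q' v) = ∏ v ∈ Ioc w b, (1 - q v) :=
    fun w hw ↦ prod_congr rfl fun v hv ↦ by
      rw [(h v (Ioc_subset_Ioc_left hw hv)).2]
  funext y
  simp only [expectedMaxCost]
  rw [hprod a le_rfl]
  refine congrArg _ (sum_congr rfl fun u hu ↦ ?_)
  rw [(h u hu).1, (h u hu).2, hprod u (mem_Ioc.1 hu).1.le]

theorem expectedMaxCost_shift (d q : ℕ → ℝ) (a b : ℕ) :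
    expectedMaxCost d q (a + 1) (b + 1)
      = expectedMaxCost (fun u ↦ d (u + 1)) (fun u ↦ q (u + 1)) a b := by
  funext y
  simp only [expectedMaxCost, ← map_add_right_Ioc _ _ 1, sum_map, prod_map,
    addRightEmbedding_apply]

theorem expectedMaxCost_le_of_le (hab : a ≤ b) {D y : ℝ}
    (hq : ∀ u ∈ Ioc a b, 0 ≤ q u ∧ q u ≤ 1) (hd : ∀ u ∈ Ioc a b, d u ≤ D) (hy : y ≤ D) :
    expectedMaxCost d q a b y ≤ D := by
  induction b, hab using Nat.le_induction with
  | base => rwa [expectedMaxCost_self]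
  | succ b hab ih =>
    have hmem : b + 1 ∈ Ioc a (b + 1) := mem_Ioc.2 ⟨by omega, le_rfl⟩
    have hle : expectedMaxCost d q a b y ≤ D :=
      ih (fun u hu ↦ hq u (Ioc_subset_Ioc_right b.le_succ hu))
        (fun u hu ↦ hd u (Ioc_subset_Ioc_right b.le_succ hu))
    rw [expectedMaxCost_trans hab b.le_succ, expectedMaxCost_succ]
    obtain ⟨hq0, hq1⟩ := hq _ hmem
    nlinarith [hd _ hmem, mul_le_mul_of_nonneg_left hle (sub_nonneg.2 hq1)]

/-- Moving the customer from position `a + 1` to position `b + 1`, with a cost that does not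
decrease, while the customers in between move one position down. -/
theorem expectedMaxCost_le_of_move_later (hab : a ≤ b)
    (hq : ∀ u ∈ Ioc a (b + 1), 0 ≤ q u ∧ q u ≤ 1)
    (hd : ∀ u ∈ Ioc a b, d u ≤ d (b + 1)) (hq's : q' (a + 1) = q (b + 1))
    (hd's : d' (a + 1) ≤ d (b + 1))
    (hmid : ∀ u ∈ Ioc a b, d' (u + 1) = d u ∧ q' (u + 1) = q u) (x : ℝ) :
    expectedMaxCost d' q' a (b + 1) x ≤ expectedMaxCost d q a (b + 1) x := by
  have hqab : ∀ u ∈ Ioc a b, 0 ≤ q u ∧ q u ≤ 1 :=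
    fun u hu ↦ hq u (Ioc_subset_Ioc_right b.le_succ hu)
  obtain ⟨hq0, hq1⟩ := hq (b + 1) (mem_Ioc.2 ⟨by omega, le_rfl⟩)
  have hΨ : expectedMaxCost d q a b (d' (a + 1)) ≤ d (b + 1) :=
    expectedMaxCost_le_of_le hab hqab hd hd's
  calc expectedMaxCost d' q' a (b + 1) x
      = expectedMaxCost d q a b ((1 - q (b + 1)) * x + q (b + 1) * d' (a + 1)) := by
        rw [expectedMaxCost_trans a.le_succ (by omega), expectedMaxCost_succ, hq's,
          expectedMaxCost_shift, expectedMaxCost_congr hmid]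
    _ = (1 - q (b + 1)) * expectedMaxCost d q a b x
          + q (b + 1) * expectedMaxCost d q a b (d' (a + 1)) :=
        expectedMaxCost_affine_combination ..
    _ ≤ (1 - q (b + 1)) * expectedMaxCost d q a b x + q (b + 1) * d (b + 1) := by gcongr
    _ = expectedMaxCost d q a (b + 1) x := by
        rw [expectedMaxCost_trans hab b.le_succ, expectedMaxCost_succ]

end

theorem stmt9_general (n s t : ℕ) (hs : 1 ≤ s) (hst : s ≤ t) (htn : t ≤ n)
    (d q d' q' : ℕ → ℝ)
    (hq : ∀ i ∈ Icc 1 n, 0 < q i ∧ q i ≤ 1)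
    (hdmono : ∀ i ∈ Icc 1 n, ∀ j ∈ Icc 1 n, i ≤ j → d i ≤ d j)
    (hqs : q' s = q t) (hds : d' s ≤ d t)
    (hmid : ∀ u, s + 1 ≤ u → u ≤ t → d' u = d (u - 1) ∧ q' u = q (u - 1))
    (hout : ∀ u, u < s ∨ t < u → d' u = d u ∧ q' u = q u) :
    (∑ u ∈ Icc 1 n, q' u * d' u * ∏ v ∈ Ioc u n, (1 - q' v))
      ≤ ∑ u ∈ Icc 1 n, q u * d u * ∏ v ∈ Ioc u n, (1 - q v) := by
  obtain ⟨a, rfl⟩ : ∃ a, s = a + 1 := ⟨s - 1, by omega⟩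
  obtain ⟨b, rfl⟩ : ∃ b, t = b + 1 := ⟨t - 1, by omega⟩
  have hq01 : ∀ u ∈ Ioc 0 n, 0 ≤ q u ∧ q u ≤ 1 := fun u hu ↦
    have h := hq u (by rwa [← Icc_add_one_left_eq_Ioc] at hu)
    ⟨h.1.le, h.2⟩
  have hsplit : ∀ d q : ℕ → ℝ, expectedMaxCost d q 0 n 0
      = expectedMaxCost d q (b + 1) n (expectedMaxCost d q a (b + 1) (expectedMaxCost d q 0 a 0)) :=
    fun d q ↦ by rw [← expectedMaxCost_trans (by omega) htn,
      ← expectedMaxCost_trans a.zero_le (by omega)]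
  have hhead : expectedMaxCost d' q' 0 a = expectedMaxCost d q 0 a :=
    expectedMaxCost_congr fun u hu ↦ hout u (.inl (by simp at hu; omega))
  have htail : expectedMaxCost d' q' (b + 1) n = expectedMaxCost d q (b + 1) n :=
    expectedMaxCost_congr fun u hu ↦ hout u (.inr (by simp at hu; omega))
  have hmove : ∀ x, expectedMaxCost d' q' a (b + 1) x ≤ expectedMaxCost d q a (b + 1) x := by
    refine expectedMaxCost_le_of_move_later (by omega)
      (fun u hu ↦ hq01 u (Ioc_subset_Ioc_left a.zero_le (Ioc_subset_Ioc_right htn hu)))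
      (fun u hu ↦ ?_) hqs hds (fun u hu ↦ ?_) <;> simp only [mem_Ioc] at hu
    · exact hdmono u (by simp; omega) (b + 1) (by simp; omega) (by omega)
    · simpa using hmid (u + 1) (by omega) (by omega)
  rw [sum_Icc_eq_expectedMaxCost, sum_Icc_eq_expectedMaxCost, hsplit, hsplit, hhead, htail]
  exact expectedMaxCost_monotone (fun u hu ↦ (hq01 u (Ioc_subset_Ioc_left (by omega) hu)).2)
    (hmove _)

/-- Theorem 2.1 core: moving one customer from distance d' (position s) to a larger
distance d (position t ≥ s), shifting the intermediate entries down, does not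
decrease the expected maximum service cost. -/
theorem stmt9 (n s t : ℕ) (hs : 1 ≤ s) (hst : s ≤ t) (htn : t ≤ n)
    (d q d' q' : ℕ → ℝ)
    (hq : ∀ i ∈ Icc 1 n, 0 < q i ∧ q i ≤ 1)
    (hq' : ∀ i ∈ Icc 1 n, 0 < q' i ∧ q' i ≤ 1)
    (hd0 : ∀ i ∈ Icc 1 n, 0 ≤ d i)
    (hd'0 : ∀ i ∈ Icc 1 n, 0 ≤ d' i)
    (hdmono : ∀ i ∈ Icc 1 n, ∀ j ∈ Icc 1 n, i ≤ j → d i ≤ d j)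
    (hd'mono : ∀ i ∈ Icc 1 n, ∀ j ∈ Icc 1 n, i ≤ j → d' i ≤ d' j)
    (hqs : q' s = q t) (hds : d' s ≤ d t)
    (hmid : ∀ u, s + 1 ≤ u → u ≤ t → d' u = d (u - 1) ∧ q' u = q (u - 1))
    (hout : ∀ u, u < s ∨ t < u → d' u = d u ∧ q' u = q u) :
    (∑ u ∈ Icc 1 n, q' u * d' u * ∏ v ∈ Ioc u n, (1 - q' v))
      ≤ ∑ u ∈ Icc 1 n, q u * d u * ∏ v ∈ Ioc u n, (1 - q v) :=
  stmt9_general n s t hs hst htn d q d' q' hq hdmono hqs hds hmid hout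
end

section
/- Let d_1 ≤ ... ≤ d_n ≥ 0 and q_1,...,q_n ∈ [0,1]. For any K with 1 ≤ K ≤ n, the truncated objective F_K = ∑_{t=n-K+1}^{n} q_t d_t ∏_{i=t+1}^{n}(1-q_i) satisfies F_K ≤ F_n and F_n - F_K ≤ d_{n-K} · ∏_{i=n-K+1}^{n}(1-q_i), where F_n is the full expected maximum service cost. -/
open Finset

lemma telescope15 (n : ℕ) (q : ℕ → ℝ)
    (hq : ∀ i ∈ Icc 1 n, 0 ≤ q i ∧ q i ≤ 1) :
    ∀ m, m ≤ n →
      (∑ t ∈ Ioc 0 m, q t * ∏ i ∈ Ioc t n, (1 - q i))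
        = (∏ i ∈ Ioc m n, (1 - q i)) - ∏ i ∈ Ioc 0 n, (1 - q i) := by
  intro m
  induction m with
  | zero => simp
  | succ m ih =>
    intro hmn
    have hm : m ≤ n := Nat.le_of_succ_le hmn
    rw [show Ioc 0 (m+1) = Icc 1 (m+1) from (Finset.Icc_add_one_left_eq_Ioc 0 (m+1)).symm,
      Finset.sum_Icc_succ_top (by omega),
      show Icc 1 m = Ioc 0 m from Finset.Icc_add_one_left_eq_Ioc 0 m, ih hm]
    have : (∏ i ∈ Ioc m n, (1 - q i)) = (1 - q (m+1)) * ∏ i ∈ Ioc (m+1) n, (1 - q i) := by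
      rw [← Finset.prod_Ioc_consecutive _ (Nat.le_succ m) hmn]
      simp [Nat.Ioc_succ_singleton]
    rw [this]; ring

/-- The K-truncated objective F_K lower-bounds F_n, with truncation error at most
d_{n-K} · ∏_{i=n-K+1}^n (1-q_i). -/
theorem stmt15 (n K : ℕ) (hK : 1 ≤ K) (hKn : K ≤ n) (d q : ℕ → ℝ)
    (hd0 : ∀ i, i ≤ n → 0 ≤ d i)
    (hdmono : ∀ i j : ℕ, i ≤ j → j ≤ n → d i ≤ d j)
    (hq : ∀ i ∈ Icc 1 n, 0 ≤ q i ∧ q i ≤ 1) :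
    (∑ t ∈ Icc (n - K + 1) n, q t * d t * ∏ i ∈ Ioc t n, (1 - q i))
      ≤ (∑ t ∈ Icc 1 n, q t * d t * ∏ i ∈ Ioc t n, (1 - q i)) ∧
    (∑ t ∈ Icc 1 n, q t * d t * ∏ i ∈ Ioc t n, (1 - q i)) -
        (∑ t ∈ Icc (n - K + 1) n, q t * d t * ∏ i ∈ Ioc t n, (1 - q i))
      ≤ d (n - K) * ∏ i ∈ Icc (n - K + 1) n, (1 - q i) := by
  set m := n - K with hm
  have hmn : m ≤ n := Nat.sub_le n K
  have hsplit : (∑ t ∈ Icc 1 n, q t * d t * ∏ i ∈ Ioc t n, (1 - q i))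
      = (∑ t ∈ Ioc 0 m, q t * d t * ∏ i ∈ Ioc t n, (1 - q i))
        + (∑ t ∈ Icc (m + 1) n, q t * d t * ∏ i ∈ Ioc t n, (1 - q i)) := by
    rw [show Icc 1 n = Ioc 0 n from Finset.Icc_add_one_left_eq_Ioc 0 n,
      show Icc (m+1) n = Ioc m n from Finset.Icc_add_one_left_eq_Ioc m n,
      Finset.sum_Ioc_consecutive _ (Nat.zero_le m) hmn]
  have hterm : ∀ t ∈ Ioc 0 m, 0 ≤ q t * d t * ∏ i ∈ Ioc t n, (1 - q i) := by
    intro t ht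
    simp only [mem_Ioc] at ht
    have htn : t ∈ Icc 1 n := by simp; omega
    refine mul_nonneg (mul_nonneg (hq t htn).1 (hd0 t (by omega))) ?_
    exact Finset.prod_nonneg fun i hi => by
      have := hq i (by simp at hi ⊢; omega); linarith [this.2]
  have hrest : 0 ≤ ∑ t ∈ Ioc 0 m, q t * d t * ∏ i ∈ Ioc t n, (1 - q i) :=
    Finset.sum_nonneg hterm
  constructor
  · rw [hsplit]; linarith
  · rw [hsplit]
    have hbound : (∑ t ∈ Ioc 0 m, q t * d t * ∏ i ∈ Ioc t n, (1 - q i))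
        ≤ d m * ∑ t ∈ Ioc 0 m, q t * ∏ i ∈ Ioc t n, (1 - q i) := by
      rw [Finset.mul_sum]
      refine Finset.sum_le_sum fun t ht => ?_
      simp only [mem_Ioc] at ht
      have hqt := hq t (by simp; omega)
      have hp : (0:ℝ) ≤ ∏ i ∈ Ioc t n, (1 - q i) :=
        Finset.prod_nonneg fun i hi => by
          have := hq i (by simp at hi ⊢; omega); linarith [this.2]
      have hdt : d t ≤ d m := hdmono t m (by omega) hmn
      calc q t * d t * ∏ i ∈ Ioc t n, (1 - q i)
          ≤ q t * d m * ∏ i ∈ Ioc t n, (1 - q i) := by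
            apply mul_le_mul_of_nonneg_right _ hp
            exact mul_le_mul_of_nonneg_left hdt hqt.1
        _ = d m * (q t * ∏ i ∈ Ioc t n, (1 - q i)) := by ring
    have htel := telescope15 n q hq m hmn
    have hfull : (0:ℝ) ≤ ∏ i ∈ Ioc 0 n, (1 - q i) :=
      Finset.prod_nonneg fun i hi => by
        have := hq i (by simp at hi ⊢; omega); linarith [this.2]
    have hdm : 0 ≤ d m := hd0 m hmn
    have : d m * ∑ t ∈ Ioc 0 m, q t * ∏ i ∈ Ioc t n, (1 - q i)
        ≤ d m * ∏ i ∈ Ioc m n, (1 - q i) := by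
      apply mul_le_mul_of_nonneg_left _ hdm
      rw [htel]; linarith
    rw [show Icc (m+1) n = Ioc m n from Finset.Icc_add_one_left_eq_Ioc m n]
    linarith
end
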